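/- Hiding a set disjoint from U is nonexpansive with respect to d_U: if A ∩ U = ∅ then for all P, Q in T↓, d_U(P \ A, Q \ A) ≤ d_U(P, Q). -/

import Mathlib

open scoped Classical

namespace CSPLL

variable {E : Type*}

/-- Events: `none` is the termination signal ✓, `some a` is a visible event. -/
abbrev Ev (E : Type*) := Option E

/-- A member of `Σ^{*✓}`: the termination event ✓ may occur only as the last element. -/
def ValidTrace (s : List (Ev E)) : Prop := (none : Ev E) ∉ s.dropLast

/-- The semantic domain `T↓`: pairs `(T, D)` of (behavioural) traces and divergences
satisfying the axioms of the divergence-strict traces model. -/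
structure TD (E : Type*) where
  T : Set (List (Ev E))
  D : Set (List (Ev E))
  valid : ∀ s ∈ T, ValidTrace s
  d_sub : D ⊆ T
  nonempty : [] ∈ T
  prefix_closed : ∀ s t : List (Ev E), s ++ t ∈ T → s ∈ T
  tick_div : ∀ s : List (Ev E), s ++ [none] ∈ D → s ∈ D
  div_ext : ∀ s t : List (Ev E), s ∈ D → (none : Ev E) ∉ s → ValidTrace t → s ++ t ∈ D

/-- Raw trace/divergence pairs. -/
abbrev Pair (E : Type*) := Set (List (Ev E)) × Set (List (Ev E))

def TD.pair (P : TD E) : Pair E := (P.T, P.D)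

/-- `lengthU U s` counts the occurrences of events from `U` in the trace `s`. -/
noncomputable def lengthU (U : Set E) (s : List (Ev E)) : ℕ :=
  (s.filter fun x => decide (∃ a ∈ U, x = some a)).length

/-- Restriction `(T,D) ↾_U n` of a trace/divergence pair to `U`-length `n`. -/
noncomputable def restrict (U : Set E) (n : ℕ) (P : Pair E) : Pair E :=
  let D' := P.2 ∪ {u | ∃ s t, s ∈ P.1 ∧ (none : Ev E) ∉ s ∧ lengthU U s = n ∧
                       ValidTrace t ∧ u = s ++ t}
  (D' ∪ {s ∈ P.1 | lengthU U s ≤ n}, D')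

/-- The metric `d_U(P,Q) = inf {2^{-n} | P ↾_U n = Q ↾_U n}` (taken in `[0,1]`). -/
noncomputable def dU (U : Set E) (P Q : Pair E) : ℝ :=
  sInf {x : ℝ | ∃ n : ℕ, restrict U n P = restrict U n Q ∧ x = (1 / 2 : ℝ) ^ n}

noncomputable def dTD (U : Set E) (P Q : TD E) : ℝ := dU U P.pair Q.pair

/-- Projection of a trace: delete all `A`-events (keeping ✓). -/
noncomputable def hideEv (A : Set E) (t : List (Ev E)) : List (Ev E) :=
  t.filter fun x => decide (∀ a ∈ A, x ≠ some a)

/-- Hiding `P \ A` on trace/divergence pairs. -/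
noncomputable def hideP (A : Set E) (P : TD E) : Pair E :=
  let D' := {x | ∃ t ∈ P.D, ∃ r, ValidTrace r ∧ x = hideEv A t ++ r} ∪
    {x | ∃ u : ℕ → E, (∀ n, (List.range n).map (fun i => (some (u i) : Ev E)) ∈ P.T) ∧
      ∃ N, (∀ n ≥ N, u n ∈ A) ∧ ∃ r, ValidTrace r ∧
        x = hideEv A ((List.range N).map (fun i => (some (u i) : Ev E))) ++ r}
  (D' ∪ {x | ∃ t ∈ P.T, x = hideEv A t}, D')

/-!
Because `A ∩ U = ∅`, hiding does not change `U`-lengths. A divergence of `P \ A` comes from a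
divergence of `P`, from a trace of `P` of `U`-length `n` followed by anything, or from an infinite
run of `P` that ends in `A`-events; such a run either stays below `U`-length `n`, so that all its
prefixes are traces of `Q` when `P ↾_U n = Q ↾_U n`, or passes through a trace of `U`-length
exactly `n`. So `P ↾_U n = Q ↾_U n` forces `(P \ A) ↾_U n = (Q \ A) ↾_U n`, except for the
divergences that are not valid traces (✓ followed by further events), which no restriction
separates. Those agree as soon as `P \ A` and `Q \ A` agree at some level; if they agree at no
level, `d_U(P \ A, Q \ A)` is the infimum of the empty set, which is `0`.
-/

lemma lengthU_append (U : Set E) (s t : List (Ev E)) :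
    lengthU U (s ++ t) = lengthU U s + lengthU U t := by
  simp [lengthU]

lemma hideEv_append (A : Set E) (s t : List (Ev E)) :
    hideEv A (s ++ t) = hideEv A s ++ hideEv A t := by
  simp [hideEv]

@[simp]
lemma none_mem_hideEv {A : Set E} {t : List (Ev E)} :
    (none : Ev E) ∈ hideEv A t ↔ none ∈ t := by
  simp [hideEv]

lemma lengthU_hideEv {U A : Set E} (hdisj : A ∩ U = ∅) (t : List (Ev E)) :
    lengthU U (hideEv A t) = lengthU U t := by
  unfold lengthU hideEv
  rw [List.filter_filter]
  congr 1
  refine List.filter_congr fun x _ => ?_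
  by_cases hx : ∃ a ∈ U, x = some a
  · obtain ⟨b, hb, rfl⟩ := hx
    have hbA : b ∉ A := fun hbA => (Set.eq_empty_iff_forall_notMem.mp hdisj) b ⟨hbA, hb⟩
    grind
  · simp [hx]

lemma validTrace_of_none_notMem {t : List (Ev E)} (h : (none : Ev E) ∉ t) : ValidTrace t :=
  fun hm => h ((List.dropLast_sublist t).subset hm)

lemma ValidTrace.append {s t : List (Ev E)} (hs : (none : Ev E) ∉ s) (ht : ValidTrace t) :
    ValidTrace (s ++ t) := by
  obtain rfl | ht₀ := eq_or_ne t []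
  · simpa using validTrace_of_none_notMem hs
  · unfold ValidTrace at *
    rw [List.dropLast_append_of_ne_nil ht₀, List.mem_append, not_or]
    exact ⟨hs, ht⟩

lemma ValidTrace.of_append {s t : List (Ev E)} (h : ValidTrace (s ++ t)) : ValidTrace t := by
  obtain rfl | ht₀ := eq_or_ne t []
  · simp [ValidTrace]
  · unfold ValidTrace at *
    rw [List.dropLast_append_of_ne_nil ht₀, List.mem_append, not_or] at h
    exact h.2

lemma ValidTrace.hideEv {A : Set E} {t : List (Ev E)} (h : ValidTrace t) :
    ValidTrace (hideEv A t) := by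
  obtain rfl | ⟨l, a, rfl⟩ := t.eq_nil_or_concat'
  · simp [ValidTrace, CSPLL.hideEv]
  · have hl : (none : Ev E) ∉ l := by simpa [ValidTrace] using h
    unfold ValidTrace
    rw [hideEv_append]
    by_cases ha : ∀ b ∈ A, a ≠ some b
    · rw [show CSPLL.hideEv A [a] = [a] from List.filter_cons_of_pos (by simpa using ha),
        List.dropLast_concat]
      simpa using hl
    · rw [show CSPLL.hideEv A [a] = [] from List.filter_cons_of_neg (by simpa using ha),
        List.append_nil]
      exact fun hm => hl (none_mem_hideEv.1 ((List.dropLast_sublist _).subset hm))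

lemma exists_append_lengthU_eq (U : Set E) {l : List (Ev E)} {n : ℕ} (hn : n ≤ lengthU U l) :
    ∃ l₁ l₂, l = l₁ ++ l₂ ∧ lengthU U l₁ = n := by
  induction l using List.reverseRecOn with
  | nil => exact ⟨[], [], rfl, by simp_all [lengthU]⟩
  | append_singleton l a ih =>
    rw [lengthU_append] at hn
    by_cases hl : n ≤ lengthU U l
    · obtain ⟨l₁, l₂, rfl, hl₁⟩ := ih hl
      exact ⟨l₁, l₂ ++ [a], by simp, hl₁⟩
    · have ha : lengthU U [a] ≤ 1 := List.length_filter_le _ _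
      exact ⟨l ++ [a], [], by simp, by rw [lengthU_append]; omega⟩

def runPrefix (u : ℕ → E) (n : ℕ) : List (Ev E) :=
  (List.range n).map fun i => (some (u i) : Ev E)

lemma runPrefix_add (u : ℕ → E) (N k : ℕ) :
    runPrefix u (N + k) =
      runPrefix u N ++ (List.range k).map fun i => (some (u (N + i)) : Ev E) := by
  simp [runPrefix, List.range_add]

lemma none_notMem_runPrefix (u : ℕ → E) (n : ℕ) : (none : Ev E) ∉ runPrefix u n := by
  simp [runPrefix]

lemma hideEv_runPrefix_add {A : Set E} {u : ℕ → E} {N : ℕ} (hA : ∀ n ≥ N, u n ∈ A) (k : ℕ) :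
    hideEv A (runPrefix u (N + k)) = hideEv A (runPrefix u N) := by
  rw [runPrefix_add, hideEv_append, List.append_right_eq_self, hideEv, List.filter_eq_nil_iff]
  simp only [List.mem_map, List.mem_range, decide_eq_true_eq, not_forall]
  rintro _ ⟨i, -, rfl⟩
  exact ⟨u (N + i), hA _ (Nat.le_add_right N i), not_not.2 rfl⟩

lemma restrict_fst (U : Set E) (n : ℕ) (P : Pair E) :
    (restrict U n P).1 = (restrict U n P).2 ∪ {s ∈ P.1 | lengthU U s ≤ n} := rfl

lemma validTrace_of_mem_restrict_snd_of_notMem {U : Set E} {n : ℕ} {X : Pair E}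
    {x : List (Ev E)} (hx : x ∈ (restrict U n X).2) (hX : x ∉ X.2) : ValidTrace x := by
  obtain ⟨s, t, -, hs, -, ht, rfl⟩ := hx.resolve_left hX
  exact ht.append hs

lemma TD.validTrace_of_mem_restrict_snd (R : TD E) {U : Set E} {n : ℕ} {x : List (Ev E)}
    (hx : x ∈ (restrict U n R.pair).2) : ValidTrace x := by
  by_cases hD : x ∈ R.D
  · exact R.valid x (R.d_sub hD)
  · exact validTrace_of_mem_restrict_snd_of_notMem hx hD

lemma TD.restrict_zero (R : TD E) (U : Set E) :
    restrict U 0 R.pair = ({t | ValidTrace t}, {t | ValidTrace t}) := by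
  have hsnd : (restrict U 0 R.pair).2 = {t | ValidTrace t} := by
    refine Set.Subset.antisymm (fun x => R.validTrace_of_mem_restrict_snd) fun x hx => ?_
    exact Or.inr ⟨[], x, R.nonempty, List.not_mem_nil, by simp [lengthU], hx, rfl⟩
  refine Prod.ext ?_ hsnd
  rw [restrict_fst, hsnd, Set.union_eq_left]
  exact fun x hx => R.valid x hx.1

lemma mem_snd_of_restrict_eq_of_not_validTrace {U : Set E} {m : ℕ} {X Y : Pair E}
    (h : restrict U m X = restrict U m Y) : ∀ x ∈ X.2, ¬ ValidTrace x → x ∈ Y.2 := by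
  intro x hx hinv
  by_contra hY
  have hmem : x ∈ (restrict U m Y).2 := h ▸ Or.inl hx
  exact hinv (validTrace_of_mem_restrict_snd_of_notMem hmem hY)

lemma TD.mem_T_of_mem_restrict_fst (R : TD E) {U : Set E} {n : ℕ} {x : List (Ev E)}
    (hx : x ∈ (restrict U n R.pair).1) (hlt : lengthU U x < n) : x ∈ R.T := by
  rcases hx with (hD | ⟨s, t, -, -, hs, -, rfl⟩) | ⟨hT, -⟩
  · exact R.d_sub hD
  · rw [lengthU_append] at hlt
    omega
  · exact hT

lemma append_mem_hideP_snd (A : Set E) (P : TD E) {y r : List (Ev E)} (hy : y ∈ (hideP A P).2)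
    (hny : (none : Ev E) ∉ y) (hr : ValidTrace r) : y ++ r ∈ (hideP A P).2 := by
  rcases hy with ⟨d, hd, r', -, rfl⟩ | ⟨u, hu, N, hA, r', -, rfl⟩
  · refine Or.inl ⟨d, hd, r' ++ r, hr.append fun h => hny ?_, by simp⟩
    exact List.mem_append_right _ h
  · refine Or.inr ⟨u, hu, N, hA, r' ++ r, hr.append fun h => hny ?_, by simp⟩
    exact List.mem_append_right _ h

section Restrict

variable {U A : Set E} {n : ℕ} {P Q : TD E} {x r : List (Ev E)}

lemma hideEv_append_mem_restrict_hideP_snd (hdisj : A ∩ U = ∅)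
    (hx : x ∈ (restrict U n Q.pair).2) (hv : ValidTrace (hideEv A x ++ r)) :
    hideEv A x ++ r ∈ (restrict U n (hideP A Q)).2 := by
  rcases hx with hD | ⟨s, t, hs, hns, hlen, -, rfl⟩
  · exact Or.inl (Or.inl ⟨x, hD, r, hv.of_append, rfl⟩)
  · rw [hideEv_append, List.append_assoc] at hv ⊢
    exact Or.inr ⟨hideEv A s, hideEv A t ++ r, Or.inr ⟨s, hs, rfl⟩, by simpa using hns,
      by rw [lengthU_hideEv hdisj, hlen], hv.of_append, rfl⟩

lemma hideEv_append_mem_restrict_hideP_snd_of_fst (hdisj : A ∩ U = ∅)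
    (hx : x ∈ (restrict U n Q.pair).1) (hnx : (none : Ev E) ∉ x) (hlen : lengthU U x = n)
    (hr : ValidTrace r) : hideEv A x ++ r ∈ (restrict U n (hideP A Q)).2 := by
  rcases hx with hx | ⟨hT, -⟩
  · exact hideEv_append_mem_restrict_hideP_snd hdisj hx (hr.append (by simpa using hnx))
  · exact Or.inr ⟨hideEv A x, r, Or.inr ⟨x, hT, rfl⟩, by simpa using hnx,
      by rw [lengthU_hideEv hdisj, hlen], hr, rfl⟩

lemma hideEv_mem_restrict_hideP_fst (hdisj : A ∩ U = ∅) (hx : x ∈ (restrict U n Q.pair).1) :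
    hideEv A x ∈ (restrict U n (hideP A Q)).1 := by
  rcases hx with hx | ⟨hT, hlen⟩
  · have hv : ValidTrace (hideEv A x ++ []) := by
      simpa using (Q.validTrace_of_mem_restrict_snd hx).hideEv
    exact Or.inl
      (List.append_nil (hideEv A x) ▸ hideEv_append_mem_restrict_hideP_snd hdisj hx hv)
  · exact Or.inr ⟨Or.inr ⟨x, hT, rfl⟩, by rwa [lengthU_hideEv hdisj]⟩

lemma hideEv_runPrefix_append_mem_restrict_hideP_snd (hdisj : A ∩ U = ∅)
    (h : restrict U n P.pair = restrict U n Q.pair) {u : ℕ → E} {N : ℕ}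
    (hu : ∀ k, runPrefix u k ∈ P.T) (hA : ∀ k ≥ N, u k ∈ A) (hr : ValidTrace r) :
    hideEv A (runPrefix u N) ++ r ∈ (restrict U n (hideP A Q)).2 := by
  by_cases hN : n ≤ lengthU U (runPrefix u N)
  · obtain ⟨l₁, l₂, hsplit, hl₁⟩ := exists_append_lengthU_eq U hN
    have hnone : (none : Ev E) ∉ l₁ ++ l₂ := hsplit ▸ none_notMem_runPrefix u N
    have hl₁P : l₁ ∈ (restrict U n P.pair).1 :=
      Or.inr ⟨P.prefix_closed l₁ l₂ (hsplit ▸ hu N), hl₁.le⟩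
    rw [hsplit, hideEv_append, List.append_assoc]
    refine hideEv_append_mem_restrict_hideP_snd_of_fst hdisj (h ▸ hl₁P)
      (fun h => hnone (List.mem_append_left _ h)) hl₁ (hr.append ?_)
    simpa using fun h => hnone (List.mem_append_right _ h)
  · -- past `N` the run stays below `U`-length `n`, where `Q` has the same traces as `P`
    have hQ : ∀ k, runPrefix u (N + k) ∈ Q.T := fun k => by
      have hlt : lengthU U (runPrefix u (N + k)) < n := by
        rw [← lengthU_hideEv hdisj, hideEv_runPrefix_add hA, lengthU_hideEv hdisj]
        omega
      exact Q.mem_T_of_mem_restrict_fst (h ▸ Or.inr ⟨hu _, hlt.le⟩) hlt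
    have hQ' : ∀ k, runPrefix u k ∈ Q.T := fun k =>
      Q.prefix_closed _ _ (runPrefix_add u k N ▸ add_comm N k ▸ hQ k)
    exact Or.inl (Or.inr ⟨u, hQ', N, hA, r, hr, rfl⟩)

variable (hdisj : A ∩ U = ∅) (h : restrict U n P.pair = restrict U n Q.pair)
  (hinv : ∀ x ∈ (hideP A P).2, ¬ ValidTrace x → x ∈ (hideP A Q).2)
include hdisj h hinv

lemma mem_restrict_hideP_snd_of_mem_hideP_snd (hx : x ∈ (hideP A P).2) :
    x ∈ (restrict U n (hideP A Q)).2 := by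
  by_cases hv : ValidTrace x
  swap; · exact Or.inl (hinv x hx hv)
  rcases hx with ⟨d, hd, r, -, rfl⟩ | ⟨u, hu, N, hA, r, hr, rfl⟩
  · exact hideEv_append_mem_restrict_hideP_snd hdisj (h ▸ Or.inl hd) hv
  · exact hideEv_runPrefix_append_mem_restrict_hideP_snd hdisj h hu hA hr

lemma restrict_hideP_snd_subset :
    (restrict U n (hideP A P)).2 ⊆ (restrict U n (hideP A Q)).2 := by
  rintro x (hx | ⟨s, t, hs | ⟨t₀, ht₀, rfl⟩, hns, hlen, ht, rfl⟩)
  · exact mem_restrict_hideP_snd_of_mem_hideP_snd hdisj h hinv hx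
  · exact mem_restrict_hideP_snd_of_mem_hideP_snd hdisj h hinv
      (append_mem_hideP_snd A P hs hns ht)
  · rw [lengthU_hideEv hdisj] at hlen
    exact hideEv_append_mem_restrict_hideP_snd_of_fst hdisj (h ▸ Or.inr ⟨ht₀, hlen.le⟩)
      (by simpa using hns) hlen ht

lemma restrict_hideP_fst_subset :
    (restrict U n (hideP A P)).1 ⊆ (restrict U n (hideP A Q)).1 := by
  rintro x (hx | ⟨hx | ⟨t₀, ht₀, rfl⟩, hlen⟩)
  · exact Or.inl (restrict_hideP_snd_subset hdisj h hinv hx)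
  · exact Or.inl (mem_restrict_hideP_snd_of_mem_hideP_snd hdisj h hinv hx)
  · rw [lengthU_hideEv hdisj] at hlen
    exact hideEv_mem_restrict_hideP_fst hdisj (h ▸ Or.inr ⟨ht₀, hlen⟩)

end Restrict

lemma restrict_hideP_eq {U A : Set E} (hdisj : A ∩ U = ∅) {m n : ℕ} {P Q : TD E}
    (hn : restrict U n P.pair = restrict U n Q.pair)
    (hm : restrict U m (hideP A P) = restrict U m (hideP A Q)) :
    restrict U n (hideP A P) = restrict U n (hideP A Q) := by
  have hinv := mem_snd_of_restrict_eq_of_not_validTrace hm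
  have hinv' := mem_snd_of_restrict_eq_of_not_validTrace hm.symm
  exact Prod.ext
    ((restrict_hideP_fst_subset hdisj hn hinv).antisymm
      (restrict_hideP_fst_subset hdisj hn.symm hinv'))
    ((restrict_hideP_snd_subset hdisj hn hinv).antisymm
      (restrict_hideP_snd_subset hdisj hn.symm hinv'))

lemma dU_nonneg (U : Set E) (X Y : Pair E) : 0 ≤ dU U X Y :=
  Real.sInf_nonneg (by rintro _ ⟨n, -, rfl⟩; positivity)

lemma dU_le_dU_of_restrict_eq {U : Set E} {X Y X' Y' : Pair E}
    (hXY : ∃ n, restrict U n X = restrict U n Y)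
    (h : ∀ m n, restrict U m X' = restrict U m Y' → restrict U n X = restrict U n Y →
      restrict U n X' = restrict U n Y') :
    dU U X' Y' ≤ dU U X Y := by
  by_cases hX' : ∃ m, restrict U m X' = restrict U m Y'
  · obtain ⟨m, hm⟩ := hX'
    obtain ⟨n₀, hn₀⟩ := hXY
    refine le_csInf ⟨_, n₀, hn₀, rfl⟩ ?_
    rintro _ ⟨n, hn, rfl⟩
    exact csInf_le ⟨0, by rintro _ ⟨k, -, rfl⟩; positivity⟩ ⟨n, h m n hm hn, rfl⟩
  · have hempty : {x : ℝ | ∃ m, restrict U m X' = restrict U m Y' ∧ x = (1 / 2 : ℝ) ^ m} = ∅ :=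
        Set.eq_empty_of_forall_notMem fun _ ⟨m, hm, _⟩ => hX' ⟨m, hm⟩
    rw [dU, hempty, Real.sInf_empty]
    exact dU_nonneg U X Y

/-- Hiding a set of events disjoint from `U` is nonexpansive with respect to `d_U`. -/
theorem hide_nonexpansive (U A : Set E) (hdisj : A ∩ U = ∅) (P Q : TD E) :
    dU U (hideP A P) (hideP A Q) ≤ dU U P.pair Q.pair :=
  dU_le_dU_of_restrict_eq ⟨0, by rw [P.restrict_zero, Q.restrict_zero]⟩ fun _ _ hm hn =>
    restrict_hideP_eq hdisj hn hm

end CSPLL
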